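/- arXiv:1108.5273 — 6 statements merged into one kernel-verified Lean document; each statement's English description precedes it below -/
import Mathlib

section
/- If G is a properly edge-coloured simple graph with minimum degree δ ≥ 1 such that every vertex-deleted subgraph G − v contains a rainbow matching of size δ − 1, and some vertex v of G has degree greater than 3(δ − 1), then G contains a rainbow matching of size δ. -/
/-- A matching given as a finite set of edges of `G`: pairwise vertex-disjoint. -/
def IsMatchingF {V : Type*} (G : SimpleGraph V) (M : Finset (Sym2 V)) : Prop :=
  (∀ e ∈ M, e ∈ G.edgeSet) ∧
    ∀ e₁ ∈ M, ∀ e₂ ∈ M, e₁ ≠ e₂ → ∀ v : V, v ∈ e₁ → v ∉ e₂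

/-- A proper edge-colouring: distinct edges sharing a vertex get distinct colours. -/
def IsProperColoring {V : Type*} (G : SimpleGraph V) (c : Sym2 V → ℕ) : Prop :=
  ∀ e₁ ∈ G.edgeSet, ∀ e₂ ∈ G.edgeSet, e₁ ≠ e₂ → (∃ v, v ∈ e₁ ∧ v ∈ e₂) → c e₁ ≠ c e₂

/-- A rainbow matching: a matching whose edges have pairwise distinct colours. -/
def IsRainbowMatching {V : Type*} (G : SimpleGraph V) (c : Sym2 V → ℕ)
    (M : Finset (Sym2 V)) : Prop :=
  IsMatchingF G M ∧ Set.InjOn c ↑M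

/-- If every vertex-deleted subgraph has a rainbow matching of size δ-1
and some vertex has degree greater than 3(δ-1), then G has a rainbow matching of size δ. -/
theorem stmt_1 {V : Type*} [Fintype V] [DecidableEq V]
    (G : SimpleGraph V) [DecidableRel G.Adj] (c : Sym2 V → ℕ)
    (hc : IsProperColoring G c)
    (δ : ℕ) (hδ : δ = G.minDegree) (h1 : 1 ≤ δ)
    (hdel : ∀ v : V, ∃ M : Finset (Sym2 V),
      IsRainbowMatching G c M ∧ M.card = δ - 1 ∧ ∀ e ∈ M, v ∉ e)
    (hv : ∃ v : V, 3 * (δ - 1) < G.degree v) :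
    ∃ M : Finset (Sym2 V), IsRainbowMatching G c M ∧ M.card = δ := by
  classical
  obtain ⟨v, hvdeg⟩ := hv
  obtain ⟨M, ⟨⟨hMedge, hMdisj⟩, hMinj⟩, hMcard, hMv⟩ := hdel v
  set N := G.neighborFinset v with hN
  set B1 := N.filter (fun u => ∃ e ∈ M, u ∈ e) with hB1def
  set B2 := N.filter (fun u => ∃ e ∈ M, c e = c s(v, u)) with hB2def
  have hB1 : B1.card ≤ 2 * (δ - 1) := by
    have hsub : B1 ⊆ M.biUnion (fun e => Finset.univ.filter (· ∈ e)) := by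
      intro u hu
      rw [hB1def, Finset.mem_filter] at hu
      obtain ⟨e, he, hue⟩ := hu.2
      exact Finset.mem_biUnion.2 ⟨e, he, Finset.mem_filter.2 ⟨Finset.mem_univ _, hue⟩⟩
    calc B1.card ≤ (M.biUnion (fun e => Finset.univ.filter (· ∈ e))).card :=
          Finset.card_le_card hsub
      _ ≤ ∑ e ∈ M, (Finset.univ.filter (· ∈ e)).card := Finset.card_biUnion_le
      _ ≤ ∑ _e ∈ M, 2 := by
          apply Finset.sum_le_sum
          intro e _
          induction e using Sym2.ind with
          | _ a b =>
            have : Finset.univ.filter (· ∈ s(a, b)) ⊆ {a, b} := by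
              intro w hw
              rw [Finset.mem_filter] at hw
              rcases Sym2.mem_iff.1 hw.2 with h | h <;> simp [h]
            calc (Finset.univ.filter (· ∈ s(a, b))).card ≤ ({a, b} : Finset V).card :=
                  Finset.card_le_card this
              _ ≤ 2 := Finset.card_insert_le _ _ |>.trans (by simp)
      _ = 2 * M.card := by rw [Finset.sum_const, smul_eq_mul, Nat.mul_comm]
      _ = 2 * (δ - 1) := by rw [hMcard]
  have hB2 : B2.card ≤ δ - 1 := by
    have : B2.card ≤ (M.image c).card := by
      apply Finset.card_le_card_of_injOn (fun u => c s(v, u))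
      · intro u hu
        rw [hB2def, Finset.mem_coe, Finset.mem_filter] at hu
        obtain ⟨e, he, hce⟩ := hu.2
        exact Finset.mem_image.2 ⟨e, he, hce⟩
      · intro u1 hu1c u2 hu2c hcc
        have hu1 := Finset.mem_coe.1 hu1c
        have hu2 := Finset.mem_coe.1 hu2c
        by_contra hne
        have h1' : s(v, u1) ∈ G.edgeSet := by
          rw [SimpleGraph.mem_edgeSet]
          exact (SimpleGraph.mem_neighborFinset _ _ _).1
            (Finset.mem_filter.1 hu1).1
        have h2' : s(v, u2) ∈ G.edgeSet := by
          rw [SimpleGraph.mem_edgeSet]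
          exact (SimpleGraph.mem_neighborFinset _ _ _).1
            (Finset.mem_filter.1 hu2).1
        have hne' : s(v, u1) ≠ s(v, u2) := by
          intro h
          rw [Sym2.eq_iff] at h
          rcases h with ⟨-, h⟩ | ⟨h, h'⟩
          · exact hne h
          · exact hne (h'.trans h)
        exact hc _ h1' _ h2' hne' ⟨v, by simp, by simp⟩ hcc
    calc B2.card ≤ (M.image c).card := this
      _ ≤ M.card := Finset.card_image_le
      _ = δ - 1 := hMcard
  have hcard : (B1 ∪ B2).card ≤ 3 * (δ - 1) := by
    calc (B1 ∪ B2).card ≤ B1.card + B2.card := Finset.card_union_le _ _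
      _ ≤ 2 * (δ - 1) + (δ - 1) := Nat.add_le_add hB1 hB2
      _ = 3 * (δ - 1) := by ring
  have hNcard : N.card = G.degree v := G.card_neighborFinset_eq_degree v
  have hex : ∃ u ∈ N, u ∉ B1 ∪ B2 := by
    by_contra h
    push_neg at h
    have : N ⊆ B1 ∪ B2 := fun u hu => h u hu
    have := Finset.card_le_card this
    omega
  obtain ⟨u, huN, huB⟩ := hex
  have huB1 : ¬∃ e ∈ M, u ∈ e := by
    intro h
    exact huB (Finset.mem_union_left _ (Finset.mem_filter.2 ⟨huN, h⟩))
  have huB2 : ¬∃ e ∈ M, c e = c s(v, u) := by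
    intro h
    exact huB (Finset.mem_union_right _ (Finset.mem_filter.2 ⟨huN, h⟩))
  have hadj : G.Adj v u := (SimpleGraph.mem_neighborFinset _ _ _).1 huN
  have hfE : s(v, u) ∈ G.edgeSet := G.mem_edgeSet.2 hadj
  have hfM : s(v, u) ∉ M := fun h => hMv _ h (by simp)
  refine ⟨insert s(v, u) M, ⟨⟨?_, ?_⟩, ?_⟩, ?_⟩
  · intro e he
    rcases Finset.mem_insert.1 he with h | h
    · exact h ▸ hfE
    · exact hMedge e h
  · intro e₁ he₁ e₂ he₂ hne w hw
    rcases Finset.mem_insert.1 he₁ with h1' | h1' <;>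
      rcases Finset.mem_insert.1 he₂ with h2' | h2'
    · exact absurd (h1'.trans h2'.symm) hne
    · subst h1'
      rcases Sym2.mem_iff.1 hw with h | h
      · subst h; exact hMv _ h2'
      · subst h; exact fun hu => huB1 ⟨e₂, h2', hu⟩
    · subst h2'
      intro hwf
      rcases Sym2.mem_iff.1 hwf with h | h
      · subst h; exact hMv _ h1' hw
      · subst h; exact huB1 ⟨e₁, h1', hw⟩
    · exact hMdisj e₁ h1' e₂ h2' hne w hw
  · rw [Finset.coe_insert]
    intro a ha b hb hab
    rcases Set.mem_insert_iff.1 ha with h1' | h1' <;>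
      rcases Set.mem_insert_iff.1 hb with h2' | h2'
    · exact h1'.trans h2'.symm
    · exact absurd (h1' ▸ hab).symm (fun h => huB2 ⟨b, h2', h⟩)
    · exact absurd (h2' ▸ hab) (fun h => huB2 ⟨a, h1', h⟩)
    · exact hMinj h1' h2' hab
  · rw [Finset.card_insert_of_notMem hfM, hMcard]
    omega
end

section
/- Every simple graph G with at least 3·δ(G) vertices contains a matching of size δ(G). -/
section helpers
variable {V : Type*} [DecidableEq V]

/-- The two-element finset of a `Sym2`. -/
def sFin : Sym2 V → Finset V :=
  Sym2.lift ⟨fun a b => {a, b}, fun a b => Finset.pair_comm a b⟩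

@[simp] lemma mem_sFin {v : V} {e : Sym2 V} : v ∈ sFin e ↔ v ∈ e := by
  induction e using Sym2.inductionOn with
  | hf a b => simp [sFin, Sym2.mem_iff]

lemma matchingF_subset {G : SimpleGraph V} {M M' : Finset (Sym2 V)}
    (h : M' ⊆ M) (hM : IsMatchingF G M) : IsMatchingF G M' :=
  ⟨fun e he => hM.1 e (h he),
   fun e₁ h1 e₂ h2 hne v hv => hM.2 e₁ (h h1) e₂ (h h2) hne v hv⟩

lemma matchingF_insert {G : SimpleGraph V} {M : Finset (Sym2 V)} {a b : V}
    (hM : IsMatchingF G M) (hab : G.Adj a b)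
    (ha : ∀ e ∈ M, a ∉ e) (hb : ∀ e ∈ M, b ∉ e) :
    IsMatchingF G (insert s(a, b) M) ∧ (insert s(a, b) M).card = M.card + 1 := by
  have hnm : s(a, b) ∉ M := fun h => ha _ h (by simp)
  have hnotin : ∀ e ∈ M, ∀ w : V, w ∈ s(a, b) → w ∉ e := by
    intro e he w hw
    rcases Sym2.mem_iff.1 hw with rfl | rfl
    · exact ha _ he
    · exact hb _ he
  refine ⟨⟨?_, ?_⟩, Finset.card_insert_of_notMem hnm⟩
  · intro e he
    rcases Finset.mem_insert.1 he with rfl | he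
    · exact hab
    · exact hM.1 e he
  · intro e₁ h1 e₂ h2 hne w hw
    rcases Finset.mem_insert.1 h1 with h1 | h1
    · rcases Finset.mem_insert.1 h2 with h2 | h2
      · exact absurd (h1.trans h2.symm) hne
      · exact hnotin e₂ h2 w (h1 ▸ hw)
    · rcases Finset.mem_insert.1 h2 with h2 | h2
      · subst h2
        intro hw2
        exact hnotin e₁ h1 w hw2 hw
      · exact hM.2 e₁ h1 e₂ h2 hne w hw

end helpers

section main
variable {V : Type*} [Fintype V] [DecidableEq V] (G : SimpleGraph V) [DecidableRel G.Adj]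

/-- Key extension lemma. -/
lemma extend_matching {M : Finset (Sym2 V)} (hM : IsMatchingF G M)
    (hlt : M.card < G.minDegree) (hn : 3 * G.minDegree ≤ Fintype.card V) :
    ∃ M' : Finset (Sym2 V), IsMatchingF G M' ∧ M'.card = M.card + 1 := by
  classical
  -- covered vertices
  set C : Finset V := M.biUnion sFin with hC
  have hCcard : C.card ≤ 2 * M.card := by
    calc C.card ≤ ∑ e ∈ M, (sFin e).card := Finset.card_biUnion_le
    _ ≤ ∑ e ∈ M, 2 := by
        refine Finset.sum_le_sum fun e _ => ?_
        induction e using Sym2.inductionOn with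
        | hf a b => exact (Finset.card_insert_le _ _).trans (by simp)
    _ = 2 * M.card := by rw [Finset.sum_const, smul_eq_mul, mul_comm]
  have hcov : ∀ v : V, v ∈ C ↔ ∃ e ∈ M, v ∈ e := by
    intro v; simp [hC, Finset.mem_biUnion]
  -- there are at least two uncovered vertices
  have hUcard : 2 ≤ Cᶜ.card := by
    have := Finset.card_compl (s := C) (α := V)
    omega
  obtain ⟨u, hu, v, hv, huv⟩ := Finset.one_lt_card.1 hUcard
  have hu' : ∀ e ∈ M, u ∉ e := fun e he hue =>
    (Finset.mem_compl.1 hu) ((hcov u).2 ⟨e, he, hue⟩)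
  have hv' : ∀ e ∈ M, v ∉ e := fun e he hve =>
    (Finset.mem_compl.1 hv) ((hcov v).2 ⟨e, he, hve⟩)
  -- Case A: two uncovered adjacent vertices
  by_cases hA : ∃ w ∈ Cᶜ, ∃ z ∈ Cᶜ, G.Adj w z
  · obtain ⟨w, hw, z, hz, hwz⟩ := hA
    have hw' : ∀ e ∈ M, w ∉ e := fun e he hwe =>
      (Finset.mem_compl.1 hw) ((hcov w).2 ⟨e, he, hwe⟩)
    have hz' : ∀ e ∈ M, z ∉ e := fun e he hze =>
      (Finset.mem_compl.1 hz) ((hcov z).2 ⟨e, he, hze⟩)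
    obtain ⟨h1, h2⟩ := matchingF_insert hM hwz hw' hz'
    exact ⟨_, h1, h2⟩
  push_neg at hA
  -- Case B: all neighbors of uncovered vertices are covered.
  have hNC : ∀ w ∈ Cᶜ, G.neighborFinset w ⊆ C := by
    intro w hw x hx
    by_contra hxC
    exact hA w hw x (Finset.mem_compl.2 hxC)
      ((SimpleGraph.mem_neighborFinset _ _ _).1 hx)
  -- degree as a sum over matching edges
  have hdeg : ∀ w ∈ Cᶜ, G.degree w = ∑ e ∈ M, (G.neighborFinset w ∩ sFin e).card := by
    intro w hw
    have heq : G.neighborFinset w = M.biUnion (fun e => G.neighborFinset w ∩ sFin e) := by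
      apply Finset.Subset.antisymm
      · intro x hx
        obtain ⟨e, he, hxe⟩ := Finset.mem_biUnion.1 (hNC w hw hx)
        exact Finset.mem_biUnion.2 ⟨e, he, Finset.mem_inter.2 ⟨hx, hxe⟩⟩
      · intro x hx
        obtain ⟨e, _, hxe⟩ := Finset.mem_biUnion.1 hx
        exact (Finset.mem_inter.1 hxe).1
    have hdisj : ∀ e₁ ∈ M, ∀ e₂ ∈ M, e₁ ≠ e₂ →
        Disjoint (G.neighborFinset w ∩ sFin e₁) (G.neighborFinset w ∩ sFin e₂) := by
      intro e₁ h1 e₂ h2 hne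
      refine Finset.disjoint_left.2 fun x hx1 hx2 => ?_
      exact hM.2 e₁ h1 e₂ h2 hne x (mem_sFin.1 (Finset.mem_inter.1 hx1).2)
        (mem_sFin.1 (Finset.mem_inter.1 hx2).2)
    have h2 := Finset.card_biUnion hdisj
    rw [← heq] at h2
    rw [← SimpleGraph.card_neighborFinset_eq_degree]
    exact h2
  -- existence of a good edge
  have hgood : ∃ a b : V, s(a, b) ∈ M ∧ G.Adj u a ∧ G.Adj v b := by
    by_contra hbad
    push_neg at hbad
    have hper : ∀ e ∈ M, (G.neighborFinset u ∩ sFin e).card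
        + (G.neighborFinset v ∩ sFin e).card ≤ 2 := by
      intro e he
      induction e using Sym2.inductionOn with
      | hf a b =>
        have hab : a ≠ b := (G.ne_of_adj (hM.1 _ he))
        have key : ∀ S : Finset V, (S ∩ ({a, b} : Finset V)).card
            = (if a ∈ S then 1 else 0) + (if b ∈ S then 1 else 0) := by
          intro S
          rw [Finset.inter_comm, ← Finset.filter_mem_eq_inter, Finset.card_filter,
            Finset.sum_pair hab]
        have hb1 : ¬(G.Adj u a ∧ G.Adj v b) := fun h =>
          (hbad a b he h.1) h.2
        have hb2 : ¬(G.Adj u b ∧ G.Adj v a) := fun h =>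
          (hbad b a (by rwa [Sym2.eq_swap]) h.1) h.2
        have e1 : sFin s(a, b) = ({a, b} : Finset V) := rfl
        rw [e1, key, key]
        simp only [SimpleGraph.mem_neighborFinset]
        split_ifs <;>
          first
            | omega
            | exact absurd ⟨by assumption, by assumption⟩ hb1
            | exact absurd ⟨by assumption, by assumption⟩ hb2
    have hsum : 2 * G.minDegree ≤ 2 * M.card := by
      calc 2 * G.minDegree ≤ G.degree u + G.degree v := by
            have := G.minDegree_le_degree u; have := G.minDegree_le_degree v; omega
      _ = ∑ e ∈ M, ((G.neighborFinset u ∩ sFin e).card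
            + (G.neighborFinset v ∩ sFin e).card) := by
          rw [hdeg u hu, hdeg v hv, Finset.sum_add_distrib]
      _ ≤ ∑ e ∈ M, 2 := Finset.sum_le_sum hper
      _ = 2 * M.card := by rw [Finset.sum_const, smul_eq_mul, mul_comm]
    omega
  obtain ⟨a, b, hab, hua, hvb⟩ := hgood
  have habne : a ≠ b := G.ne_of_adj (hM.1 _ hab)
  have haC : a ∈ C := (hcov a).2 ⟨_, hab, by simp⟩
  have hbC : b ∈ C := (hcov b).2 ⟨_, hab, by simp⟩
  have hua' : u ≠ a := fun h => (Finset.mem_compl.1 hu) (h ▸ haC)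
  have hub' : u ≠ b := fun h => (Finset.mem_compl.1 hu) (h ▸ hbC)
  have hva' : v ≠ a := fun h => (Finset.mem_compl.1 hv) (h ▸ haC)
  have hvb' : v ≠ b := fun h => (Finset.mem_compl.1 hv) (h ▸ hbC)
  -- build the new matching
  set M₀ : Finset (Sym2 V) := M.erase s(a, b) with hM₀
  have hM₀sub : M₀ ⊆ M := Finset.erase_subset _ _
  have hM₀m : IsMatchingF G M₀ := matchingF_subset hM₀sub hM
  have hbfree : ∀ e ∈ M₀, b ∉ e := fun e he hbe =>
    hM.2 _ hab e (hM₀sub he) (Ne.symm (Finset.ne_of_mem_erase he)) b (by simp) hbe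
  have hafree : ∀ e ∈ M₀, a ∉ e := fun e he hae =>
    hM.2 _ hab e (hM₀sub he) (Ne.symm (Finset.ne_of_mem_erase he)) a (by simp) hae
  obtain ⟨hM₁m, hM₁c⟩ := matchingF_insert hM₀m hvb
    (fun e he => hv' e (hM₀sub he)) hbfree
  obtain ⟨hM₂m, hM₂c⟩ := matchingF_insert (M := insert s(v, b) M₀) hM₁m hua
    (by
      intro e he
      rcases Finset.mem_insert.1 he with rfl | he
      · rw [Sym2.mem_iff]
        push_neg
        exact ⟨huv, hub'⟩
      · exact hu' e (hM₀sub he))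
    (by
      intro e he
      rcases Finset.mem_insert.1 he with rfl | he
      · rw [Sym2.mem_iff]
        push_neg
        exact ⟨hva'.symm, habne⟩
      · exact hafree e he)
  refine ⟨insert s(u, a) (insert s(v, b) M₀), hM₂m, ?_⟩
  have hc0 : M₀.card = M.card - 1 := Finset.card_erase_of_mem hab
  have hk1 : 1 ≤ M.card := Finset.card_pos.2 ⟨_, hab⟩
  omega

end main

/-- Every graph $G$ with $|G| ≥ 3δ(G)$ has a matching of size $δ(G)$. -/
theorem stmt_2 {V : Type*} [Fintype V] [DecidableEq V]
    (G : SimpleGraph V) [DecidableRel G.Adj]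
    (hn : 3 * G.minDegree ≤ Fintype.card V) :
    ∃ M : Finset (Sym2 V), IsMatchingF G M ∧ M.card = G.minDegree := by
  suffices h : ∀ k, k ≤ G.minDegree → ∃ M : Finset (Sym2 V), IsMatchingF G M ∧ M.card = k from
    h _ le_rfl
  intro k
  induction k with
  | zero => exact fun _ => ⟨∅, ⟨by simp, by simp⟩, by simp⟩
  | succ k ih =>
    intro hk
    obtain ⟨M, hM, hc⟩ := ih (Nat.le_of_succ_le hk)
    obtain ⟨M', hM', hc'⟩ := extend_matching G hM (by omega) hn
    exact ⟨M', hM', by omega⟩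
end

section
/- Let G be a properly edge-coloured simple graph containing a rainbow matching M = {x₁y₁, ..., x_{δ−1}y_{δ−1}} of size δ − 1 using colours 1, ..., δ−1, and suppose G has no rainbow matching of size δ. Let W = V(G) \ V(M), and call an edge good if its colour is not in {1, ..., δ−1} and it has an endpoint in W. Then for each i, if x_i is incident with at least three good edges, then no good edge is incident with y_i. -/
/-- An edge is *good* (w.r.t. the rainbow matching with vertices `x i, y i` and colours
`1, …, δ-1`) if its colour is not in `{1, …, δ-1}` and it has an endpoint outside `V(M)`. -/
def GoodEdge {V : Type*} (G : SimpleGraph V) (c : Sym2 V → ℕ) (δ : ℕ)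
    (x y : Fin (δ - 1) → V) (e : Sym2 V) : Prop :=
  e ∈ G.edgeSet ∧ (∀ j : Fin (δ - 1), c e ≠ j.val + 1) ∧
    ∃ v, v ∈ e ∧ ∀ j : Fin (δ - 1), v ≠ x j ∧ v ≠ y j

lemma pick3 {α : Type*} (P Q : α → Prop) (a b c : α)
    (hab : a ≠ b) (hac : a ≠ c) (hbc : b ≠ c)
    (hP : ∀ u ∈ ({a,b,c} : Set α), ∀ v ∈ ({a,b,c} : Set α), P u → P v → u = v)
    (hQ : ∀ u ∈ ({a,b,c} : Set α), ∀ v ∈ ({a,b,c} : Set α), Q u → Q v → u = v) :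
    ∃ z ∈ ({a,b,c} : Set α), ¬ P z ∧ ¬ Q z := by
  by_contra h
  push_neg at h
  have ha' : P a ∨ Q a := or_iff_not_imp_left.mpr (h a (by simp))
  have hb' : P b ∨ Q b := or_iff_not_imp_left.mpr (h b (by simp))
  have hc' : P c ∨ Q c := or_iff_not_imp_left.mpr (h c (by simp))
  have ma : a ∈ ({a,b,c} : Set α) := by simp
  have mb : b ∈ ({a,b,c} : Set α) := by simp
  have mc : c ∈ ({a,b,c} : Set α) := by simp
  rcases ha' with pa | qa <;> rcases hb' with pb | qb <;> rcases hc' with pc | qc <;>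
    first
      | exact hab (hP a ma b mb ‹P a› ‹P b›)
      | exact hac (hP a ma c mc ‹P a› ‹P c›)
      | exact hbc (hP b mb c mc ‹P b› ‹P c›)
      | exact hab (hQ a ma b mb ‹Q a› ‹Q b›)
      | exact hac (hQ a ma c mc ‹Q a› ‹Q c›)
      | exact hbc (hQ b mb c mc ‹Q b› ‹Q c›)

/-- If `x i` is incident with at least three good edges, then no good edge is
incident with `y i`. -/
theorem stmt_4 {V : Type*} [Fintype V] [DecidableEq V]
    (G : SimpleGraph V) (c : Sym2 V → ℕ)
    (hc : IsProperColoring G c)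
    (δ : ℕ) (x y : Fin (δ - 1) → V)
    (M : Finset (Sym2 V))
    (hMdef : M = Finset.image (fun i => s(x i, y i)) Finset.univ)
    (hM : IsRainbowMatching G c M) (hMcard : M.card = δ - 1)
    (hcol : ∀ i : Fin (δ - 1), c s(x i, y i) = i.val + 1)
    (hno : ¬ ∃ N : Finset (Sym2 V), IsRainbowMatching G c N ∧ N.card = δ) :
    ∀ i : Fin (δ - 1),
      3 ≤ {e : Sym2 V | GoodEdge G c δ x y e ∧ x i ∈ e}.ncard →
      ∀ e : Sym2 V, GoodEdge G c δ x y e → y i ∉ e := by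
  intro i hcard e he hyie
  classical
  set m := s(x i, y i) with hm
  have hmemM : ∀ j : Fin (δ - 1), s(x j, y j) ∈ M := by
    intro j; rw [hMdef]; exact Finset.mem_image_of_mem _ (Finset.mem_univ j)
  have hmem : m ∈ M := hmemM i
  have hmM : ∀ m' ∈ M, ∃ j : Fin (δ - 1), m' = s(x j, y j) := by
    intro m' hm'
    rw [hMdef] at hm'
    obtain ⟨j, _, hj⟩ := Finset.mem_image.mp hm'
    exact ⟨j, hj.symm⟩
  have hedge : ∀ m' ∈ M, m' ∈ G.edgeSet := hM.1.1
  have hxyne : ∀ j, x j ≠ y j := by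
    intro j h
    have := hedge _ (hmemM j)
    rw [SimpleGraph.mem_edgeSet] at this
    exact G.ne_of_adj this h
  -- decompose e
  obtain ⟨heE, hecol, w, hwe, hwW⟩ := he
  have hwy : y i ≠ w := fun h => (hwW i).2 h.symm
  have heq : e = s(y i, w) := (Sym2.mem_and_mem_iff hwy).mp ⟨hyie, hwe⟩
  -- e is not incident to x i
  have hxie : x i ∉ e := by
    rw [heq, Sym2.mem_iff]
    rintro (h | h)
    · exact hxyne i h
    · exact (hwW i).1 h.symm
  -- three good edges at x i
  set S := {e : Sym2 V | GoodEdge G c δ x y e ∧ x i ∈ e} with hS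
  obtain ⟨e₁, e₂, e₃, h1, h2, h3, h12, h13, h23⟩ :=
    (Set.two_lt_ncard_iff S.toFinite).mp (by omega : 2 < S.ncard)
  -- pick a suitable one
  have hPuniq : ∀ u ∈ ({e₁, e₂, e₃} : Set (Sym2 V)), ∀ v ∈ ({e₁, e₂, e₃} : Set (Sym2 V)),
      c u = c e → c v = c e → u = v := by
    intro u hu v hv hcu hcv
    have huS : u ∈ S := by rcases hu with h | h | h <;> subst h <;> assumption
    have hvS : v ∈ S := by rcases hv with h | h | h <;> subst h <;> assumption
    by_contra hne
    exact hc u huS.1.1 v hvS.1.1 hne ⟨x i, huS.2, hvS.2⟩ (hcu.trans hcv.symm)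
  have hQuniq : ∀ u ∈ ({e₁, e₂, e₃} : Set (Sym2 V)), ∀ v ∈ ({e₁, e₂, e₃} : Set (Sym2 V)),
      u = s(x i, w) → v = s(x i, w) → u = v := fun u _ v _ hu hv => hu.trans hv.symm
  obtain ⟨z, hzmem, hzc, hzw⟩ :=
    pick3 (fun f => c f = c e) (fun f => f = s(x i, w)) e₁ e₂ e₃ h12 h13 h23 hPuniq hQuniq
  have hzS : z ∈ S := by rcases hzmem with h | h | h <;> subst h <;> assumption
  obtain ⟨⟨hzE, hzcol, u, huz, huW⟩, hxiz⟩ := hzS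
  have hux : x i ≠ u := fun h => (huW i).1 h.symm
  have hzeq : z = s(x i, u) := (Sym2.mem_and_mem_iff hux).mp ⟨hxiz, huz⟩
  have huw : u ≠ w := by
    intro h; apply hzw; rw [hzeq, h]
  -- z ∉ M, e ∉ M, z ≠ e
  have hnotM : ∀ f : Sym2 V, ∀ v, v ∈ f → (∀ j, v ≠ x j ∧ v ≠ y j) → f ∉ M := by
    intro f v hvf hvW hfM
    obtain ⟨j, hj⟩ := hmM f hfM
    rw [hj, Sym2.mem_iff] at hvf
    rcases hvf with h | h
    · exact (hvW j).1 h
    · exact (hvW j).2 h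
  have hzM : z ∉ M := hnotM z u huz huW
  have heM : e ∉ M := hnotM e w hwe hwW
  have hze : z ≠ e := fun h => hxie (h ▸ hxiz)
  -- vertex disjointness facts
  have hze_disj : ∀ v, v ∈ z → v ∉ e := by
    intro v hv
    rw [hzeq, Sym2.mem_iff] at hv
    rw [heq, Sym2.mem_iff]
    push_neg
    rcases hv with rfl | rfl
    · exact ⟨hxyne i, fun h => (hwW i).1 h.symm⟩
    · exact ⟨fun h => (huW i).2 h, huw⟩
  have hzM_disj : ∀ m' ∈ M, m' ≠ m → ∀ v, v ∈ z → v ∉ m' := by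
    intro m' hm' hm'm v hv
    rw [hzeq, Sym2.mem_iff] at hv
    rcases hv with rfl | rfl
    · exact hM.1.2 m hmem m' hm' (Ne.symm hm'm) _ (by rw [hm]; simp)
    · obtain ⟨j, hj⟩ := hmM m' hm'
      rw [hj, Sym2.mem_iff]
      rintro (h' | h')
      · exact (huW j).1 h'
      · exact (huW j).2 h'
  have heM_disj : ∀ m' ∈ M, m' ≠ m → ∀ v, v ∈ e → v ∉ m' := by
    intro m' hm' hm'm v hv
    rw [heq, Sym2.mem_iff] at hv
    rcases hv with rfl | rfl
    · exact hM.1.2 m hmem m' hm' (Ne.symm hm'm) _ (by rw [hm]; simp)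
    · obtain ⟨j, hj⟩ := hmM m' hm'
      rw [hj, Sym2.mem_iff]
      rintro (h' | h')
      · exact (hwW j).1 h'
      · exact (hwW j).2 h'
  -- colours of M edges
  have hcM : ∀ m' ∈ M, ∃ j : Fin (δ - 1), c m' = j.val + 1 := by
    intro m' hm'
    obtain ⟨j, hj⟩ := hmM m' hm'
    exact ⟨j, by rw [hj, hcol]⟩
  -- the new matching
  set N : Finset (Sym2 V) := insert e (insert z (M.erase m)) with hN
  have hzer : z ∉ M.erase m := fun h => hzM (Finset.mem_of_mem_erase h)
  have heins : e ∉ insert z (M.erase m) := by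
    rw [Finset.mem_insert]
    rintro (h | h)
    · exact hze h.symm
    · exact heM (Finset.mem_of_mem_erase h)
  have hcardN : N.card = δ := by
    have hi := i.isLt
    rw [hN, Finset.card_insert_of_notMem heins, Finset.card_insert_of_notMem hzer,
      Finset.card_erase_of_mem hmem, hMcard]
    omega
  -- membership characterization
  have hmemN : ∀ f ∈ N, f = e ∨ f = z ∨ (f ∈ M ∧ f ≠ m) := by
    intro f hf
    rw [hN, Finset.mem_insert, Finset.mem_insert, Finset.mem_erase] at hf
    tauto
  apply hno
  refine ⟨N, ⟨⟨?_, ?_⟩, ?_⟩, hcardN⟩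
  · intro f hf
    rcases hmemN f hf with h | h | ⟨h, _⟩
    · exact h ▸ heE
    · exact h ▸ hzE
    · exact hedge f h
  · intro f₁ hf₁ f₂ hf₂ hne v hv1 hv2
    rcases hmemN f₁ hf₁ with h1 | h1 | ⟨h1, h1'⟩ <;>
      rcases hmemN f₂ hf₂ with h2 | h2 | ⟨h2, h2'⟩
    · exact hne (h1.trans h2.symm)
    · exact hze_disj v (h2 ▸ hv2) (h1 ▸ hv1)
    · exact heM_disj f₂ h2 h2' v (h1 ▸ hv1) hv2
    · exact hze_disj v (h1 ▸ hv1) (h2 ▸ hv2)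
    · exact hne (h1.trans h2.symm)
    · exact hzM_disj f₂ h2 h2' v (h1 ▸ hv1) hv2
    · exact heM_disj f₁ h1 h1' v (h2 ▸ hv2) hv1
    · exact hzM_disj f₁ h1 h1' v (h2 ▸ hv2) hv1
    · exact hM.1.2 f₁ h1 f₂ h2 hne v hv1 hv2
  · intro f₁ hf₁ f₂ hf₂ hcc
    rw [Finset.mem_coe] at hf₁ hf₂
    rcases hmemN f₁ hf₁ with h1 | h1 | ⟨h1, _⟩ <;>
      rcases hmemN f₂ hf₂ with h2 | h2 | ⟨h2, _⟩
    · exact h1.trans h2.symm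
    · exact absurd (h2 ▸ h1 ▸ hcc.symm : c z = c e) hzc
    · obtain ⟨j, hj⟩ := hcM f₂ h2
      exact absurd (h1 ▸ hcc.trans hj : c e = j.val + 1) (hecol j)
    · exact absurd (h1 ▸ h2 ▸ hcc : c z = c e) hzc
    · exact h1.trans h2.symm
    · obtain ⟨j, hj⟩ := hcM f₂ h2
      exact absurd (h1 ▸ hcc.trans hj : c z = j.val + 1) (hzcol j)
    · obtain ⟨j, hj⟩ := hcM f₁ h1
      exact absurd (h2 ▸ hcc.symm.trans hj : c e = j.val + 1) (hecol j)
    · obtain ⟨j, hj⟩ := hcM f₁ h1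
      exact absurd (h2 ▸ hcc.symm.trans hj : c z = j.val + 1) (hzcol j)
    · exact hM.2 (Finset.mem_coe.mpr h1) (Finset.mem_coe.mpr h2) hcc
end

section
/- Let G be a properly edge-coloured simple graph with no rainbow matching of size δ, containing a rainbow matching M = {x_iy_i : 1 ≤ i ≤ δ−1} with c(x_iy_i) = i. Set W = V(G) \ V(M); call an edge good if its colour is not in {1, ..., δ−1} and it has an endpoint in W, and suppose every good edge has an endpoint in V(M). Suppose each of x₁, ..., x_r is incident with at least seven good edges, and let W' = W ∪ {y₁, ..., y_r}. Then no edge of the induced subgraph G[W'] has its colour in {1, ..., r}. -/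
/-- Any subset of a rainbow matching is a rainbow matching. -/
lemma subset_rainbow {V : Type*} (G : SimpleGraph V) (c : Sym2 V → ℕ)
    {M N : Finset (Sym2 V)} (hsub : N ⊆ M) (hM : IsRainbowMatching G c M) :
    IsRainbowMatching G c N :=
  ⟨⟨fun e he => hM.1.1 e (hsub he),
    fun e₁ h₁ e₂ h₂ => hM.1.2 e₁ (hsub h₁) e₂ (hsub h₂)⟩,
   hM.2.mono (Finset.coe_subset.mpr hsub)⟩

/-- Extending a rainbow matching by a new compatible edge. -/
lemma extend_rainbow {V : Type*} [DecidableEq V] (G : SimpleGraph V) (c : Sym2 V → ℕ)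
    (N : Finset (Sym2 V)) (hN : IsRainbowMatching G c N)
    (f : Sym2 V) (hf : f ∈ G.edgeSet)
    (hdisj : ∀ g ∈ N, ∀ v, v ∈ f → v ∉ g)
    (hcolf : ∀ g ∈ N, c f ≠ c g) :
    IsRainbowMatching G c (insert f N) ∧ (insert f N).card = N.card + 1 := by
  obtain ⟨a, ha⟩ : ∃ a, a ∈ f := ⟨f.out.1, Sym2.out_fst_mem f⟩
  have hfN : f ∉ N := fun h => hdisj f h a ha ha
  refine ⟨⟨⟨?_, ?_⟩, ?_⟩, Finset.card_insert_of_notMem hfN⟩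
  · intro g hg
    rcases Finset.mem_insert.mp hg with rfl | hg
    · exact hf
    · exact hN.1.1 g hg
  · intro e₁ h₁ e₂ h₂ hne v hv₁
    rcases Finset.mem_insert.mp h₁ with h₁' | h₁' <;>
      rcases Finset.mem_insert.mp h₂ with h₂' | h₂'
    · exact absurd (h₁'.trans h₂'.symm) hne
    · exact hdisj e₂ h₂' v (h₁' ▸ hv₁)
    · rw [h₂']
      exact fun hv₂ => hdisj e₁ h₁' v hv₂ hv₁
    · exact hN.1.2 e₁ h₁' e₂ h₂' hne v hv₁
  · intro e₁ h₁ e₂ h₂ hcc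
    simp only [Finset.coe_insert, Set.mem_insert_iff, Finset.mem_coe] at h₁ h₂
    rcases h₁ with h₁' | h₁' <;> rcases h₂ with h₂' | h₂'
    · rw [h₁', h₂']
    · have := hcolf e₂ h₂'
      rw [← h₁'] at this
      exact absurd hcc this
    · have := hcolf e₁ h₁'
      rw [← h₂'] at this
      exact absurd hcc.symm this
    · exact hN.2 h₁' h₂' hcc

/-- From at least seven good edges at `x i`, select one avoiding four vertices and
two colours; moreover its other endpoint lies outside `V(M)`. -/
lemma select_good {V : Type*} [Fintype V] [DecidableEq V]
    (G : SimpleGraph V) (c : Sym2 V → ℕ) (hc : IsProperColoring G c)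
    (δ : ℕ) (x y : Fin (δ - 1) → V) (i : Fin (δ - 1))
    (h7 : 7 ≤ {e : Sym2 V | GoodEdge G c δ x y e ∧ x i ∈ e}.ncard)
    (a1 a2 a3 a4 : V) (c1 c2 : ℕ) :
    ∃ w : V, GoodEdge G c δ x y s(x i, w) ∧ (∀ j, w ≠ x j ∧ w ≠ y j) ∧
      w ≠ a1 ∧ w ≠ a2 ∧ w ≠ a3 ∧ w ≠ a4 ∧ c s(x i, w) ≠ c1 ∧ c s(x i, w) ≠ c2 := by
  set T : Set V := {w | GoodEdge G c δ x y s(x i, w)} with hT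
  have hsub : {e : Sym2 V | GoodEdge G c δ x y e ∧ x i ∈ e} ⊆ (fun w => s(x i, w)) '' T := by
    rintro e ⟨hg, hx⟩
    obtain ⟨w, rfl⟩ := Sym2.mem_iff_exists.mp hx
    exact ⟨w, hg, rfl⟩
  have h7T : 7 ≤ T.ncard := by
    calc (7 : ℕ) ≤ _ := h7
    _ ≤ ((fun w => s(x i, w)) '' T).ncard := Set.ncard_le_ncard hsub (Set.toFinite _)
    _ ≤ T.ncard := Set.ncard_image_le (Set.toFinite _)
  have hcs : ∀ m : ℕ, ({w ∈ T | c s(x i, w) = m} : Set V).Subsingleton := by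
    intro m w hw w' hw'
    by_contra hne
    have h1 : GoodEdge G c δ x y s(x i, w) := hw.1
    have h2 : GoodEdge G c δ x y s(x i, w') := hw'.1
    have hadj : G.Adj (x i) w := G.mem_edgeSet.mp h1.1
    have hedne : s(x i, w) ≠ s(x i, w') := by
      intro h
      rcases Sym2.eq_iff.mp h with ⟨-, h'⟩ | ⟨h', h''⟩
      · exact hne h'
      · exact hadj.ne h''.symm
    exact hc _ h1.1 _ h2.1 hedne ⟨x i, Sym2.mem_mk_left _ _, Sym2.mem_mk_left _ _⟩
      (hw.2.trans hw'.2.symm)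
  set B : Set V := {w ∈ T | w = a1 ∨ w = a2 ∨ w = a3 ∨ w = a4 ∨
      c s(x i, w) = c1 ∨ c s(x i, w) = c2} with hB
  have hB6 : B.ncard ≤ 6 := by
    have hBsub : B ⊆ insert a1 (insert a2 (insert a3 (insert a4
        ({w ∈ T | c s(x i, w) = c1} ∪ {w ∈ T | c s(x i, w) = c2})))) := by
      rintro w ⟨hwT, h⟩
      simp only [Set.mem_insert_iff, Set.mem_union, Set.mem_setOf_eq]
      tauto
    have hu1 : ({w ∈ T | c s(x i, w) = c1} : Set V).ncard ≤ 1 :=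
      (Set.ncard_le_one (Set.toFinite _)).mpr (fun a ha b hb => hcs c1 ha hb)
    have hu2 : ({w ∈ T | c s(x i, w) = c2} : Set V).ncard ≤ 1 :=
      (Set.ncard_le_one (Set.toFinite _)).mpr (fun a ha b hb => hcs c2 ha hb)
    have hU : (({w ∈ T | c s(x i, w) = c1} ∪ {w ∈ T | c s(x i, w) = c2}) : Set V).ncard ≤ 2 :=
      (Set.ncard_union_le _ _).trans (add_le_add hu1 hu2)
    have h4 : (insert a4 (({w ∈ T | c s(x i, w) = c1} ∪ {w ∈ T | c s(x i, w) = c2}) : Set V)).ncard ≤ 3 :=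
      (Set.ncard_insert_le _ _).trans (by omega)
    have h3 : (insert a3 (insert a4 (({w ∈ T | c s(x i, w) = c1} ∪ {w ∈ T | c s(x i, w) = c2}) : Set V))).ncard ≤ 4 :=
      (Set.ncard_insert_le _ _).trans (by omega)
    have h2 : (insert a2 (insert a3 (insert a4 (({w ∈ T | c s(x i, w) = c1} ∪ {w ∈ T | c s(x i, w) = c2}) : Set V)))).ncard ≤ 5 :=
      (Set.ncard_insert_le _ _).trans (by omega)
    have h1 : (insert a1 (insert a2 (insert a3 (insert a4 (({w ∈ T | c s(x i, w) = c1} ∪ {w ∈ T | c s(x i, w) = c2}) : Set V))))).ncard ≤ 6 :=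
      (Set.ncard_insert_le _ _).trans (by omega)
    exact (Set.ncard_le_ncard hBsub (Set.toFinite _)).trans h1
  have hex : ∃ w ∈ T, w ∉ B := by
    by_contra h
    push_neg at h
    have : T ⊆ B := fun w hw => h w hw
    have := Set.ncard_le_ncard this (Set.toFinite _)
    omega
  obtain ⟨w, hwT, hwB⟩ := hex
  have hgood : GoodEdge G c δ x y s(x i, w) := hwT
  have hwW : ∀ j, w ≠ x j ∧ w ≠ y j := by
    obtain ⟨v', hv', hv'W⟩ := hgood.2.2
    rcases Sym2.mem_iff.mp hv' with rfl | rfl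
    · exact absurd rfl (hv'W i).1
    · exact hv'W
  have hnot : ¬ (w = a1 ∨ w = a2 ∨ w = a3 ∨ w = a4 ∨
      c s(x i, w) = c1 ∨ c s(x i, w) = c2) := fun h => hwB ⟨hwT, h⟩
  push_neg at hnot
  exact ⟨w, hgood, hwW, hnot.1, hnot.2.1, hnot.2.2.1, hnot.2.2.2.1,
    hnot.2.2.2.2.1, hnot.2.2.2.2.2⟩

/-- No edge of `G[W']` has a colour in `{1, …, r}`, where
`W' = W ∪ {y 1, …, y r}` and each of `x 1, …, x r` is incident with at least
seven good edges. -/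
theorem stmt_5 {V : Type*} [Fintype V] [DecidableEq V]
    (G : SimpleGraph V) (c : Sym2 V → ℕ)
    (hc : IsProperColoring G c)
    (δ : ℕ) (x y : Fin (δ - 1) → V)
    (M : Finset (Sym2 V))
    (hMdef : M = Finset.image (fun i => s(x i, y i)) Finset.univ)
    (hM : IsRainbowMatching G c M) (hMcard : M.card = δ - 1)
    (hcol : ∀ i : Fin (δ - 1), c s(x i, y i) = i.val + 1)
    (hno : ¬ ∃ N : Finset (Sym2 V), IsRainbowMatching G c N ∧ N.card = δ)
    -- every good edge has an endpoint in V(M)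
    (hgoodM : ∀ e : Sym2 V, GoodEdge G c δ x y e →
      ∃ j : Fin (δ - 1), x j ∈ e ∨ y j ∈ e)
    (r : ℕ) (hr : r ≤ δ - 1)
    -- each of x 1, …, x r is incident with at least seven good edges
    (hseven : ∀ i : Fin (δ - 1), i.val < r →
      7 ≤ {e : Sym2 V | GoodEdge G c δ x y e ∧ x i ∈ e}.ncard) :
    -- no edge with both endpoints in W' has colour in {1, …, r}
    ∀ e ∈ G.edgeSet,
      (∀ v, v ∈ e →
        (∀ j : Fin (δ - 1), v ≠ x j ∧ v ≠ y j) ∨ (∃ j : Fin (δ - 1), j.val < r ∧ v = y j)) →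
      ∀ k : ℕ, 1 ≤ k → k ≤ r → c e ≠ k := by
  intro e
  induction e using Sym2.ind with
  | _ u v =>
  intro he hW' k hk1 hkr hck
  -- basic facts about the matching M
  have hkd : k - 1 < δ - 1 := by omega
  set i : Fin (δ - 1) := ⟨k - 1, hkd⟩ with hidef
  have hik : i.val + 1 = k := by simp only [hidef]; omega
  have hir : i.val < r := by simp only [hidef]; omega
  have hce : c s(u, v) = i.val + 1 := by rw [hik]; exact hck
  have hMmem : ∀ l : Fin (δ - 1), s(x l, y l) ∈ M := fun l =>
    hMdef ▸ Finset.mem_image_of_mem _ (Finset.mem_univ l)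
  have hGxy : ∀ l : Fin (δ - 1), s(x l, y l) ∈ G.edgeSet := fun l => hM.1.1 _ (hMmem l)
  have hxyne : ∀ l : Fin (δ - 1), x l ≠ y l := fun l =>
    (G.mem_edgeSet.mp (hGxy l)).ne
  have hinj : Function.Injective (fun l : Fin (δ - 1) => s(x l, y l)) := by
    have h1 : (Finset.image (fun l : Fin (δ - 1) => s(x l, y l)) Finset.univ).card
        = (Finset.univ : Finset (Fin (δ - 1))).card := by
      rw [← hMdef, hMcard, Finset.card_univ, Fintype.card_fin]
    have h2 := Finset.card_image_iff.mp h1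
    intro a b hab
    exact h2 (by simp) (by simp) hab
  have hMdisj : ∀ l m : Fin (δ - 1), l ≠ m →
      ∀ v', v' ∈ s(x l, y l) → v' ∉ s(x m, y m) := fun l m hlm =>
    hM.1.2 _ (hMmem l) _ (hMmem m) (fun h => hlm (hinj h))
  have hvd : ∀ l m : Fin (δ - 1), l ≠ m →
      x l ≠ x m ∧ x l ≠ y m ∧ y l ≠ x m ∧ y l ≠ y m := by
    intro l m h
    refine ⟨fun hh => hMdisj l m h (x l) (by simp) (by simp [hh]),
      fun hh => hMdisj l m h (x l) (by simp) (by simp [hh]),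
      fun hh => hMdisj l m h (y l) (by simp) (by simp [hh]),
      fun hh => hMdisj l m h (y l) (by simp) (by simp [hh])⟩
  have hMform : ∀ g ∈ M, ∃ l : Fin (δ - 1), g = s(x l, y l) := by
    intro g hg
    rw [hMdef] at hg
    obtain ⟨l, -, hl⟩ := Finset.mem_image.mp hg
    exact ⟨l, hl.symm⟩
  have hWnotM : ∀ w : V, (∀ j, w ≠ x j ∧ w ≠ y j) → ∀ l, w ∉ s(x l, y l) := by
    intro w h l hmem
    rcases Sym2.mem_iff.mp hmem with hh | hh
    · exact (h l).1 hh
    · exact (h l).2 hh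
  -- a good-edge-at-x p is disjoint from matching edges with other index
  have hfM : ∀ (p : Fin (δ - 1)) (w : V), (∀ j', w ≠ x j' ∧ w ≠ y j') →
      ∀ m, p ≠ m → ∀ v', v' ∈ s(x p, w) → v' ∉ s(x m, y m) := by
    intro p w hwW m hpm v' hv'
    rcases Sym2.mem_iff.mp hv' with rfl | rfl
    · intro hmem
      rcases Sym2.mem_iff.mp hmem with h | h
      · exact (hvd p m hpm).1 h
      · exact (hvd p m hpm).2.1 h
    · exact hWnotM v' hwW m
  have hmu : u ∈ s(u, v) := Sym2.mem_mk_left u v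
  have hmv : v ∈ s(u, v) := Sym2.mem_mk_right u v
  have hadj : G.Adj u v := G.mem_edgeSet.mp he
  have hcne : ∀ m : Fin (δ - 1), m ≠ i → c s(u, v) ≠ c s(x m, y m) := by
    intro m hm
    rw [hce, hcol m]
    intro h
    exact hm (Fin.ext (by omega))
  -- no endpoint of e is an x-vertex
  have hnx : ∀ w, w ∈ s(u, v) → ∀ l, w ≠ x l := by
    intro w hw l
    rcases hW' w hw with h | ⟨j, hj, rfl⟩
    · exact (h l).1
    · rcases eq_or_ne j l with rfl | hjl
      · exact Ne.symm (hxyne j)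
      · exact (hvd j l hjl).2.2.1
  -- no endpoint of e equals y i
  have hni : ∀ w, w ∈ s(u, v) → w ≠ y i := by
    intro w hw heq
    subst heq
    have hne : s(u, v) ≠ s(x i, y i) := by
      intro h
      exact hnx (x i) (by rw [h]; exact Sym2.mem_mk_left _ _) i rfl
    exact hc _ he _ (hGxy i) hne ⟨y i, hw, Sym2.mem_mk_right _ _⟩
      (by rw [hce, hcol i])
  have hclass : ∀ w, w ∈ s(u, v) →
      (∀ j, w ≠ x j ∧ w ≠ y j) ∨ ∃ j : Fin (δ - 1), j.val < r ∧ w = y j ∧ j ≠ i := by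
    intro w hw
    rcases hW' w hw with h | ⟨j, hj, rfl⟩
    · exact Or.inl h
    · exact Or.inr ⟨j, hj, rfl, fun h => hni (y j) hw (by rw [h])⟩
  have hsel := fun (l : Fin (δ - 1)) (hl : l.val < r) =>
    select_good G c hc δ x y l (hseven l hl)
  have hd1 : 1 ≤ δ - 1 := by omega
  -- the mixed case, factored out for the symmetric situation
  have wycase : ∀ (u' : V) (j : Fin (δ - 1)), s(u', y j) = s(u, v) →
      (∀ m, u' ≠ x m ∧ u' ≠ y m) → j.val < r → j ≠ i → False := by
    intro u' j heq hu' hjr hji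
    have hmemE : ∀ w', w' ∈ s(u, v) ↔ (w' = u' ∨ w' = y j) := by
      intro w'
      rw [← heq, Sym2.mem_iff]
    obtain ⟨wi, hgwi, hwiW, hwiu, -, -, -, -, -⟩ := hsel i hir u' u' u' u' k k
    obtain ⟨wj, hgwj, hwjW, hwju, hwjwi, -, -, hcj, -⟩ :=
      hsel j hjr u' wi wi wi (c s(x i, wi)) (c s(x i, wi))
    set M₂ : Finset (Sym2 V) := (M.erase s(x i, y i)).erase s(x j, y j) with hM₂
    have hM₂sub : M₂ ⊆ M := (Finset.erase_subset _ _).trans (Finset.erase_subset _ _)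
    have hM₂rm : IsRainbowMatching G c M₂ := subset_rainbow G c hM₂sub hM
    have hM₂form : ∀ g ∈ M₂, ∃ m : Fin (δ - 1), g = s(x m, y m) ∧ m ≠ i ∧ m ≠ j := by
      intro g hg
      obtain ⟨m, rfl⟩ := hMform g (hM₂sub hg)
      refine ⟨m, rfl, ?_, ?_⟩
      · rintro rfl
        exact (Finset.mem_erase.mp (Finset.mem_of_mem_erase hg)).1 rfl
      · rintro rfl
        exact (Finset.mem_erase.mp hg).1 rfl
    have hM₂card : M₂.card = δ - 1 - 2 := by
      rw [hM₂, Finset.card_erase_of_mem, Finset.card_erase_of_mem (hMmem i), hMcard]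
      · omega
      · exact Finset.mem_erase.mpr ⟨fun h => hji (hinj h), hMmem j⟩
    -- step 1 : insert e
    have h1 := extend_rainbow G c M₂ hM₂rm s(u, v) he
      (by
        intro g hg v' hv'
        obtain ⟨m, rfl, hmi, hmj⟩ := hM₂form g hg
        rcases (hmemE v').mp hv' with rfl | rfl
        · exact hWnotM v' hu' m
        · intro hmem
          rcases Sym2.mem_iff.mp hmem with h | h
          · exact (hvd j m (Ne.symm hmj)).2.2.1 h
          · exact (hvd j m (Ne.symm hmj)).2.2.2 h)
      (by
        intro g hg
        obtain ⟨m, rfl, hmi, hmj⟩ := hM₂form g hg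
        exact hcne m hmi)
    -- step 2 : insert f_i = s(x i, wi)
    have hxiE : ∀ v', v' ∈ s(x i, wi) → v' ∉ s(u, v) := by
      intro v' hv' hmem
      rcases Sym2.mem_iff.mp hv' with rfl | rfl
      · rcases (hmemE _).mp hmem with h | h
        · exact (hu' i).1 h.symm
        · exact (hvd i j (Ne.symm hji)).2.1 h
      · rcases (hmemE _).mp hmem with h | h
        · exact hwiu h
        · exact (hwiW j).2 h
    have h2 := extend_rainbow G c _ h1.1 s(x i, wi) hgwi.1
      (by
        intro g hg v' hv'
        rcases Finset.mem_insert.mp hg with rfl | hg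
        · exact hxiE v' hv'
        · obtain ⟨m, rfl, hmi, hmj⟩ := hM₂form g hg
          exact hfM i wi hwiW m (Ne.symm hmi) v' hv')
      (by
        intro g hg
        rcases Finset.mem_insert.mp hg with rfl | hg
        · rw [hce]; exact hgwi.2.1 i
        · obtain ⟨m, rfl, hmi, hmj⟩ := hM₂form g hg
          rw [hcol m]; exact hgwi.2.1 m)
    -- step 3 : insert f_j = s(x j, wj)
    have hxjE : ∀ v', v' ∈ s(x j, wj) → v' ∉ s(u, v) := by
      intro v' hv' hmem
      rcases Sym2.mem_iff.mp hv' with rfl | rfl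
      · rcases (hmemE _).mp hmem with h | h
        · exact (hu' j).1 h.symm
        · exact hxyne j h
      · rcases (hmemE _).mp hmem with h | h
        · exact hwju h
        · exact (hwjW j).2 h
    have hxjfi : ∀ v', v' ∈ s(x j, wj) → v' ∉ s(x i, wi) := by
      intro v' hv' hmem
      rcases Sym2.mem_iff.mp hv' with rfl | rfl <;>
        rcases Sym2.mem_iff.mp hmem with h | h
      · exact (hvd j i hji).1 h
      · exact (hwiW j).1 h.symm
      · exact (hwjW i).1 h
      · exact hwjwi h
    have h3 := extend_rainbow G c _ h2.1 s(x j, wj) hgwj.1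
      (by
        intro g hg v' hv'
        rcases Finset.mem_insert.mp hg with rfl | hg
        · exact hxjfi v' hv'
        rcases Finset.mem_insert.mp hg with rfl | hg
        · exact hxjE v' hv'
        · obtain ⟨m, rfl, hmi, hmj⟩ := hM₂form g hg
          exact hfM j wj hwjW m (Ne.symm hmj) v' hv')
      (by
        intro g hg
        rcases Finset.mem_insert.mp hg with rfl | hg
        · exact hcj
        rcases Finset.mem_insert.mp hg with rfl | hg
        · rw [hce]; exact hgwj.2.1 i
        · obtain ⟨m, rfl, hmi, hmj⟩ := hM₂form g hg
          rw [hcol m]; exact hgwj.2.1 m)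
    apply hno
    refine ⟨_, h3.1, ?_⟩
    rw [h3.2, h2.2, h1.2, hM₂card]
    have : 2 ≤ δ - 1 := by
      have h1' := i.isLt
      have h2' := j.isLt
      have h3' : j.val ≠ i.val := fun h => hji (Fin.ext h)
      omega
    omega
  -- now the main case analysis
  rcases hclass u hmu with hu | ⟨j, hjr, huj, hji⟩
  · rcases hclass v hmv with hv | ⟨j, hjr, hvj, hji⟩
    · -- both endpoints in W
      obtain ⟨w, hgw, hwW, hwu, hwv, -, -, -, -⟩ := hsel i hir u v v v k k
      set M₁ : Finset (Sym2 V) := M.erase s(x i, y i) with hM₁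
      have hM₁sub : M₁ ⊆ M := Finset.erase_subset _ _
      have hM₁rm : IsRainbowMatching G c M₁ := subset_rainbow G c hM₁sub hM
      have hM₁form : ∀ g ∈ M₁, ∃ m : Fin (δ - 1), g = s(x m, y m) ∧ m ≠ i := by
        intro g hg
        obtain ⟨m, rfl⟩ := hMform g (hM₁sub hg)
        exact ⟨m, rfl, fun h => (Finset.mem_erase.mp hg).1 (by rw [h])⟩
      have hM₁card : M₁.card = δ - 1 - 1 := by
        rw [hM₁, Finset.card_erase_of_mem (hMmem i), hMcard]
      have h1 := extend_rainbow G c M₁ hM₁rm s(u, v) he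
        (by
          intro g hg v' hv'
          obtain ⟨m, rfl, hmi⟩ := hM₁form g hg
          rcases Sym2.mem_iff.mp hv' with rfl | rfl
          · exact hWnotM v' hu m
          · exact hWnotM v' hv m)
        (by
          intro g hg
          obtain ⟨m, rfl, hmi⟩ := hM₁form g hg
          exact hcne m hmi)
      have hxiE : ∀ v', v' ∈ s(x i, w) → v' ∉ s(u, v) := by
        intro v' hv' hmem
        rcases Sym2.mem_iff.mp hv' with rfl | rfl <;>
          rcases Sym2.mem_iff.mp hmem with h | h
        · exact (hu i).1 h.symm
        · exact (hv i).1 h.symm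
        · exact hwu h
        · exact hwv h
      have h2 := extend_rainbow G c _ h1.1 s(x i, w) hgw.1
        (by
          intro g hg v' hv'
          rcases Finset.mem_insert.mp hg with rfl | hg
          · exact hxiE v' hv'
          · obtain ⟨m, rfl, hmi⟩ := hM₁form g hg
            exact hfM i w hwW m (Ne.symm hmi) v' hv')
        (by
          intro g hg
          rcases Finset.mem_insert.mp hg with rfl | hg
          · rw [hce]; exact hgw.2.1 i
          · obtain ⟨m, rfl, hmi⟩ := hM₁form g hg
            rw [hcol m]; exact hgw.2.1 m)
      apply hno
      refine ⟨_, h2.1, ?_⟩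
      rw [h2.2, h1.2, hM₁card]
      omega
    · -- u in W, v = y j
      subst hvj
      exact (wycase u j rfl hu hjr hji).elim
  · rcases hclass v hmv with hv | ⟨l, hlr, hvl, hli⟩
    · -- u = y j, v in W
      subst huj
      exact (wycase v j (Sym2.eq_swap) hv hjr hji).elim
    · -- u = y j, v = y l
      subst huj; subst hvl
      have hjl : j ≠ l := fun h => hadj.ne (by rw [h])
      obtain ⟨wi, hgwi, hwiW, -, -, -, -, -, -⟩ := hsel i hir (x i) (x i) (x i) (x i) k k
      obtain ⟨wj, hgwj, hwjW, hwjwi, -, -, -, hcji, -⟩ :=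
        hsel j hjr wi wi wi wi (c s(x i, wi)) (c s(x i, wi))
      obtain ⟨wl, hgwl, hwlW, hwlwi, hwlwj, -, -, hcli, hclj⟩ :=
        hsel l hlr wi wj wj wj (c s(x i, wi)) (c s(x j, wj))
      set M₃ : Finset (Sym2 V) :=
        ((M.erase s(x i, y i)).erase s(x j, y j)).erase s(x l, y l) with hM₃
      have hM₃sub : M₃ ⊆ M :=
        ((Finset.erase_subset _ _).trans (Finset.erase_subset _ _)).trans
          (Finset.erase_subset _ _)
      have hM₃rm : IsRainbowMatching G c M₃ := subset_rainbow G c hM₃sub hM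
      have hM₃form : ∀ g ∈ M₃, ∃ m : Fin (δ - 1),
          g = s(x m, y m) ∧ m ≠ i ∧ m ≠ j ∧ m ≠ l := by
        intro g hg
        obtain ⟨m, rfl⟩ := hMform g (hM₃sub hg)
        have hg1 := Finset.mem_of_mem_erase hg
        have hg2 := Finset.mem_of_mem_erase hg1
        refine ⟨m, rfl, ?_, ?_, ?_⟩
        · rintro rfl; exact (Finset.mem_erase.mp hg2).1 rfl
        · rintro rfl; exact (Finset.mem_erase.mp hg1).1 rfl
        · rintro rfl; exact (Finset.mem_erase.mp hg).1 rfl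
      have hM₃card : M₃.card = δ - 1 - 3 := by
        rw [hM₃, Finset.card_erase_of_mem, Finset.card_erase_of_mem,
          Finset.card_erase_of_mem (hMmem i), hMcard]
        · omega
        · exact Finset.mem_erase.mpr ⟨fun h => hji (hinj h), hMmem j⟩
        · refine Finset.mem_erase.mpr ⟨fun h => hjl ((hinj h).symm),
            Finset.mem_erase.mpr ⟨fun h => hli (hinj h), hMmem l⟩⟩
      -- step 1 : insert e = s(y j, y l)
      have h1 := extend_rainbow G c M₃ hM₃rm s(y j, y l) he
        (by
          intro g hg v' hv'
          obtain ⟨m, rfl, hmi, hmj, hml⟩ := hM₃form g hg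
          intro hmem
          rcases Sym2.mem_iff.mp hv' with rfl | rfl <;>
            rcases Sym2.mem_iff.mp hmem with h | h
          · exact (hvd j m (fun h' => hmj h'.symm)).2.2.1 h
          · exact (hvd j m (fun h' => hmj h'.symm)).2.2.2 h
          · exact (hvd l m (fun h' => hml h'.symm)).2.2.1 h
          · exact (hvd l m (fun h' => hml h'.symm)).2.2.2 h)
        (by
          intro g hg
          obtain ⟨m, rfl, hmi, hmj, hml⟩ := hM₃form g hg
          exact hcne m hmi)
      -- step 2 : insert f_i
      have hxiE : ∀ v', v' ∈ s(x i, wi) → v' ∉ s(y j, y l) := by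
        intro v' hv' hmem
        rcases Sym2.mem_iff.mp hv' with rfl | rfl <;>
          rcases Sym2.mem_iff.mp hmem with h | h
        · exact (hvd i j (Ne.symm hji)).2.1 h
        · exact (hvd i l (Ne.symm hli)).2.1 h
        · exact (hwiW j).2 h
        · exact (hwiW l).2 h
      have h2 := extend_rainbow G c _ h1.1 s(x i, wi) hgwi.1
        (by
          intro g hg v' hv'
          rcases Finset.mem_insert.mp hg with rfl | hg
          · exact hxiE v' hv'
          · obtain ⟨m, rfl, hmi, hmj, hml⟩ := hM₃form g hg
            exact hfM i wi hwiW m (Ne.symm hmi) v' hv')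
        (by
          intro g hg
          rcases Finset.mem_insert.mp hg with rfl | hg
          · rw [hce]; exact hgwi.2.1 i
          · obtain ⟨m, rfl, hmi, hmj, hml⟩ := hM₃form g hg
            rw [hcol m]; exact hgwi.2.1 m)
      -- step 3 : insert f_j
      have hxjE : ∀ v', v' ∈ s(x j, wj) → v' ∉ s(y j, y l) := by
        intro v' hv' hmem
        rcases Sym2.mem_iff.mp hv' with rfl | rfl <;>
          rcases Sym2.mem_iff.mp hmem with h | h
        · exact hxyne j h
        · exact (hvd j l hjl).2.1 h
        · exact (hwjW j).2 h
        · exact (hwjW l).2 h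
      have hxjfi : ∀ v', v' ∈ s(x j, wj) → v' ∉ s(x i, wi) := by
        intro v' hv' hmem
        rcases Sym2.mem_iff.mp hv' with rfl | rfl <;>
          rcases Sym2.mem_iff.mp hmem with h | h
        · exact (hvd j i hji).1 h
        · exact (hwiW j).1 h.symm
        · exact (hwjW i).1 h
        · exact hwjwi h
      have h3 := extend_rainbow G c _ h2.1 s(x j, wj) hgwj.1
        (by
          intro g hg v' hv'
          rcases Finset.mem_insert.mp hg with rfl | hg
          · exact hxjfi v' hv'
          rcases Finset.mem_insert.mp hg with rfl | hg
          · exact hxjE v' hv'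
          · obtain ⟨m, rfl, hmi, hmj, hml⟩ := hM₃form g hg
            exact hfM j wj hwjW m (Ne.symm hmj) v' hv')
        (by
          intro g hg
          rcases Finset.mem_insert.mp hg with rfl | hg
          · exact hcji
          rcases Finset.mem_insert.mp hg with rfl | hg
          · rw [hce]; exact hgwj.2.1 i
          · obtain ⟨m, rfl, hmi, hmj, hml⟩ := hM₃form g hg
            rw [hcol m]; exact hgwj.2.1 m)
      -- step 4 : insert f_l
      have hxlE : ∀ v', v' ∈ s(x l, wl) → v' ∉ s(y j, y l) := by
        intro v' hv' hmem
        rcases Sym2.mem_iff.mp hv' with rfl | rfl <;>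
          rcases Sym2.mem_iff.mp hmem with h | h
        · exact (hvd l j (Ne.symm hjl)).2.1 h
        · exact hxyne l h
        · exact (hwlW j).2 h
        · exact (hwlW l).2 h
      have hxlfi : ∀ v', v' ∈ s(x l, wl) → v' ∉ s(x i, wi) := by
        intro v' hv' hmem
        rcases Sym2.mem_iff.mp hv' with rfl | rfl <;>
          rcases Sym2.mem_iff.mp hmem with h | h
        · exact (hvd l i hli).1 h
        · exact (hwiW l).1 h.symm
        · exact (hwlW i).1 h
        · exact hwlwi h
      have hxlfj : ∀ v', v' ∈ s(x l, wl) → v' ∉ s(x j, wj) := by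
        intro v' hv' hmem
        rcases Sym2.mem_iff.mp hv' with rfl | rfl <;>
          rcases Sym2.mem_iff.mp hmem with h | h
        · exact (hvd l j (Ne.symm hjl)).1 h
        · exact (hwjW l).1 h.symm
        · exact (hwlW j).1 h
        · exact hwlwj h
      have h4 := extend_rainbow G c _ h3.1 s(x l, wl) hgwl.1
        (by
          intro g hg v' hv'
          rcases Finset.mem_insert.mp hg with rfl | hg
          · exact hxlfj v' hv'
          rcases Finset.mem_insert.mp hg with rfl | hg
          · exact hxlfi v' hv'
          rcases Finset.mem_insert.mp hg with rfl | hg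
          · exact hxlE v' hv'
          · obtain ⟨m, rfl, hmi, hmj, hml⟩ := hM₃form g hg
            exact hfM l wl hwlW m (Ne.symm hml) v' hv')
        (by
          intro g hg
          rcases Finset.mem_insert.mp hg with rfl | hg
          · exact hclj
          rcases Finset.mem_insert.mp hg with rfl | hg
          · exact hcli
          rcases Finset.mem_insert.mp hg with rfl | hg
          · rw [hce]; exact hgwl.2.1 i
          · obtain ⟨m, rfl, hmi, hmj, hml⟩ := hM₃form g hg
            rw [hcol m]; exact hgwl.2.1 m)
      apply hno
      refine ⟨_, h4.1, ?_⟩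
      rw [h4.2, h3.2, h2.2, h1.2, hM₃card]
      have h1' := i.isLt
      have h2' := j.isLt
      have h3' := l.isLt
      have h4' : j.val ≠ i.val := fun h => hji (Fin.ext h)
      have h5' : l.val ≠ i.val := fun h => hli (Fin.ext h)
      have h6' : j.val ≠ l.val := fun h => hjl (Fin.ext h)
      omega
end

section
/- Let G be a properly edge-coloured simple graph with no rainbow matching of size δ, containing a rainbow matching M = {x_iy_i : 1 ≤ i ≤ δ−1} with c(x_iy_i) = i, and set W = V(G) \ V(M). Suppose that for some index i with r+s+1 ≤ i ≤ δ−1 there exists w ∈ W with c(x_iw) = δ (where δ is a colour not among 1, ..., δ−1). Then G[W] contains at most one edge of colour i. -/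
/-- If for an index `i` with `r+s+1 ≤ i ≤ δ-1` there is `w ∈ W` with
`c (x i, w) = δ`, then `G[W]` has at most one edge of colour `i`. -/
theorem stmt_6 {V : Type*} [Fintype V] [DecidableEq V]
    (G : SimpleGraph V) (c : Sym2 V → ℕ)
    (hc : IsProperColoring G c)
    (δ : ℕ) (x y : Fin (δ - 1) → V)
    (M : Finset (Sym2 V))
    (hMdef : M = Finset.image (fun i => s(x i, y i)) Finset.univ)
    (hM : IsRainbowMatching G c M) (hMcard : M.card = δ - 1)
    (hcol : ∀ i : Fin (δ - 1), c s(x i, y i) = i.val + 1)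
    (hno : ¬ ∃ N : Finset (Sym2 V), IsRainbowMatching G c N ∧ N.card = δ)
    (r s : ℕ) (i : Fin (δ - 1)) (hi : r + s ≤ i.val)
    (hw : ∃ w : V, (∀ j : Fin (δ - 1), w ≠ x j ∧ w ≠ y j) ∧
      s(x i, w) ∈ G.edgeSet ∧ c s(x i, w) = δ) :
    {e : Sym2 V | e ∈ G.edgeSet ∧ (∀ v, v ∈ e → ∀ j : Fin (δ - 1), v ≠ x j ∧ v ≠ y j) ∧
      c e = i.val + 1}.ncard ≤ 1 := by
  obtain ⟨w, hwW, hwe, hwc⟩ := hw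
  have hδ : 2 ≤ δ := by have := i.isLt; omega
  have hiδ : i.val + 1 < δ := by have := i.isLt; omega
  set key := s(x i, y i) with hkey
  have hkeyM : key ∈ M := by
    rw [hMdef]; exact Finset.mem_image_of_mem _ (Finset.mem_univ i)
  have hrep : ∀ g ∈ M, ∃ j : Fin (δ - 1), g = s(x j, y j) := by
    intro g hg; rw [hMdef] at hg
    obtain ⟨j, -, hj⟩ := Finset.mem_image.mp hg
    exact ⟨j, hj.symm⟩
  have hwM : ∀ g ∈ M, w ∉ g := by
    intro g hg hwg
    obtain ⟨j, rfl⟩ := hrep g hg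
    rcases Sym2.mem_iff.mp hwg with h | h
    · exact (hwW j).1 h
    · exact (hwW j).2 h
  -- main claim: no colour i+1 edge inside W avoiding w
  have main : ∀ e, e ∈ G.edgeSet →
      (∀ v, v ∈ e → ∀ j : Fin (δ - 1), v ≠ x j ∧ v ≠ y j) →
      c e = i.val + 1 → w ∉ e → False := by
    intro e heE heW heC hwe'
    set f := s(x i, w) with hf
    have hwf : w ∈ f := Sym2.mem_mk_right _ _
    have hxif : x i ∈ f := Sym2.mem_mk_left _ _
    have hde_f : ∀ v, v ∈ e → v ∉ f := by
      intro v hv hvf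
      rcases Sym2.mem_iff.mp hvf with h | h
      · exact (heW v hv i).1 h
      · exact hwe' (h ▸ hv)
    have hde_M : ∀ g ∈ M, ∀ v, v ∈ e → v ∉ g := by
      intro g hg v hv hvg
      obtain ⟨j, rfl⟩ := hrep g hg
      rcases Sym2.mem_iff.mp hvg with h | h
      · exact (heW v hv j).1 h
      · exact (heW v hv j).2 h
    have hdf_M : ∀ g ∈ M.erase key, ∀ v, v ∈ f → v ∉ g := by
      intro g hg v hvf hvg
      rcases Sym2.mem_iff.mp hvf with h | h
      · exact hM.1.2 key hkeyM g (Finset.mem_of_mem_erase hg)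
          (Finset.ne_of_mem_erase hg).symm (x i)
          (by rw [hkey]; exact Sym2.mem_mk_left _ _) (h ▸ hvg)
      · exact hwM g (Finset.mem_of_mem_erase hg) (h ▸ hvg)
    have hcolM : ∀ g ∈ M.erase key, c g ≠ i.val + 1 ∧ c g < δ := by
      intro g hg
      obtain ⟨j, rfl⟩ := hrep g (Finset.mem_of_mem_erase hg)
      rw [hcol j]
      constructor
      · intro h
        have : j = i := Fin.ext (by omega)
        exact Finset.ne_of_mem_erase hg (by rw [this])
      · have := j.isLt; omega
    have heM : e ∉ M := by
      intro h
      obtain ⟨j, rfl⟩ := hrep e h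
      exact ((heW (x j) (Sym2.mem_mk_left _ _) j).1 rfl)
    have hef : e ≠ f := by
      intro h
      rw [h, hwc] at heC; omega
    have hfM : f ∉ M.erase key := fun h =>
      hwM f (Finset.mem_of_mem_erase h) hwf
    have heN : e ∉ insert f (M.erase key) := by
      intro h
      rcases Finset.mem_insert.mp h with h | h
      · exact hef h
      · exact heM (Finset.mem_of_mem_erase h)
    apply hno
    refine ⟨insert e (insert f (M.erase key)), ⟨⟨?_, ?_⟩, ?_⟩, ?_⟩
    · intro g hg
      rcases Finset.mem_insert.mp hg with rfl | hg
      · exact heE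
      rcases Finset.mem_insert.mp hg with rfl | hg
      · exact hwe
      · exact hM.1.1 g (Finset.mem_of_mem_erase hg)
    · intro a ha b hb hab v hva hvb
      have ha' : a = e ∨ a = f ∨ a ∈ M.erase key := by
        rcases Finset.mem_insert.mp ha with h | h
        · exact Or.inl h
        · exact Or.inr (Finset.mem_insert.mp h)
      have hb' : b = e ∨ b = f ∨ b ∈ M.erase key := by
        rcases Finset.mem_insert.mp hb with h | h
        · exact Or.inl h
        · exact Or.inr (Finset.mem_insert.mp h)
      rcases ha' with ha' | ha' | ha' <;> rcases hb' with hb' | hb' | hb'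
      · exact absurd (ha'.trans hb'.symm) hab
      · rw [ha'] at hva; rw [hb'] at hvb; exact hde_f v hva hvb
      · rw [ha'] at hva; exact hde_M b (Finset.mem_of_mem_erase hb') v hva hvb
      · rw [ha'] at hva; rw [hb'] at hvb; exact hde_f v hvb hva
      · exact absurd (ha'.trans hb'.symm) hab
      · rw [ha'] at hva; exact hdf_M b hb' v hva hvb
      · rw [hb'] at hvb; exact hde_M a (Finset.mem_of_mem_erase ha') v hvb hva
      · rw [hb'] at hvb; exact hdf_M a ha' v hvb hva
      · exact hM.1.2 a (Finset.mem_of_mem_erase ha') b (Finset.mem_of_mem_erase hb') hab v hva hvb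
    · intro a ha b hb hcab
      simp only [Finset.coe_insert, Set.mem_insert_iff, Finset.mem_coe] at ha hb
      rcases ha with ha | ha | ha <;> rcases hb with hb | hb | hb
      · exact ha.trans hb.symm
      · exfalso; rw [ha, heC, hb, hwc] at hcab; omega
      · exfalso; rw [ha, heC] at hcab; exact (hcolM b hb).1 hcab.symm
      · exfalso; rw [ha, hwc, hb, heC] at hcab; omega
      · exact ha.trans hb.symm
      · exfalso; rw [ha, hwc] at hcab; have := (hcolM b hb).2; omega
      · exfalso; rw [hb, heC] at hcab; exact (hcolM a ha).1 hcab
      · exfalso; rw [hb, hwc] at hcab; have := (hcolM a ha).2; omega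
      · exact hM.2 (Finset.mem_coe.mpr (Finset.mem_of_mem_erase ha))
          (Finset.mem_coe.mpr (Finset.mem_of_mem_erase hb)) hcab
    · rw [Finset.card_insert_of_notMem heN, Finset.card_insert_of_notMem hfM,
        Finset.card_erase_of_mem hkeyM, hMcard]
      omega
  have hsub : {e : Sym2 V | e ∈ G.edgeSet ∧
      (∀ v, v ∈ e → ∀ j : Fin (δ - 1), v ≠ x j ∧ v ≠ y j) ∧
      c e = i.val + 1}.Subsingleton := by
    intro e₁ he₁ e₂ he₂
    by_contra hne
    have hw12 : w ∉ e₁ ∨ w ∉ e₂ := by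
      by_contra h
      push_neg at h
      exact hc e₁ he₁.1 e₂ he₂.1 hne ⟨w, h.1, h.2⟩ (he₁.2.2.trans he₂.2.2.symm)
    rcases hw12 with h | h
    · exact main e₁ he₁.1 he₁.2.1 he₁.2.2 h
    · exact main e₂ he₂.1 he₂.2.1 he₂.2.2 h
  rcases hsub.eq_empty_or_singleton with h | ⟨a, h⟩ <;> simp [h]
end

section
/- If G is a properly edge-coloured simple graph in which every edge has a distinct colour except possibly for edges sharing one common colour class of size 1 (i.e., the maximum monochromatic matching of G has size 1), then G has a rainbow matching of size δ(G) whenever |V(G)| ≥ 3·δ(G). -/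
section Aux

open Finset

variable {V : Type*} [Fintype V] [DecidableEq V]

/-- The vertex set of an edge, as a `Finset`. -/
private def evs (e : Sym2 V) : Finset V := Finset.univ.filter (· ∈ e)

private lemma mem_evs {v : V} {e : Sym2 V} : v ∈ evs e ↔ v ∈ e := by
  simp [evs]

private lemma evs_pair (x y : V) : evs (s(x, y)) = {x, y} := by
  ext a; simp [evs, Sym2.mem_iff]

private lemma evs_card_le (e : Sym2 V) : (evs e).card ≤ 2 := by
  obtain ⟨x, y, rfl⟩ : ∃ x y, e = s(x, y) := Sym2.exists.mp ⟨e, rfl⟩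
  rw [evs_pair]
  exact (card_insert_le _ _).trans (by simp)

/-- Augmentation: replace one edge of a matching by two edges to its endpoints. -/
private lemma aug (G : SimpleGraph V) (M : Finset (Sym2 V)) (hM : IsMatchingF G M)
    (x y u v : V) (he : s(x, y) ∈ M) (huv : u ≠ v)
    (hu : ∀ e ∈ M, u ∉ e) (hv : ∀ e ∈ M, v ∉ e)
    (hux : G.Adj u x) (hvy : G.Adj v y) :
    ∃ M' : Finset (Sym2 V), IsMatchingF G M' ∧ M'.card = M.card + 1 := by
  obtain ⟨hedge, hdisj⟩ := hM
  have hxy : x ≠ y := (G.mem_edgeSet.mp (hedge _ he)).ne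
  have hunx : u ∉ s(x, y) := hu _ he
  have hvnx : v ∉ s(x, y) := hv _ he
  have hux' : u ≠ x := fun h => hunx (by simp [h])
  have huy : u ≠ y := fun h => hunx (by simp [h])
  have hvx : v ≠ x := fun h => hvnx (by simp [h])
  have hvy' : v ≠ y := fun h => hvnx (by simp [h])
  refine ⟨insert s(u, x) (insert s(v, y) (M.erase s(x, y))), ⟨?_, ?_⟩, ?_⟩
  · intro e hme
    simp only [mem_insert, mem_erase] at hme
    rcases hme with rfl | rfl | ⟨_, hm⟩
    · exact G.mem_edgeSet.mpr hux
    · exact G.mem_edgeSet.mpr hvy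
    · exact hedge _ hm
  · -- disjointness
    have hkey : ∀ e₁ ∈ insert s(u, x) (insert s(v, y) (M.erase s(x, y))),
        ∀ e₂ ∈ insert s(u, x) (insert s(v, y) (M.erase s(x, y))),
        e₁ ≠ e₂ → ∀ w : V, w ∈ e₁ → w ∉ e₂ := by
      intro e₁ h1 e₂ h2 hne w hw1 hw2
      simp only [mem_insert, mem_erase] at h1 h2
      have hUX : ∀ w : V, w ∈ s(u, x) → ∀ e ∈ M, e ≠ s(x, y) → w ∉ e := by
        intro w hw e hm hne' hwe
        rcases Sym2.mem_iff.mp hw with rfl | rfl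
        · exact hu _ hm hwe
        · exact hdisj _ he _ hm (fun h => hne' h.symm) w (by simp) hwe
      have hVY : ∀ w : V, w ∈ s(v, y) → ∀ e ∈ M, e ≠ s(x, y) → w ∉ e := by
        intro w hw e hm hne' hwe
        rcases Sym2.mem_iff.mp hw with rfl | rfl
        · exact hv _ hm hwe
        · exact hdisj _ he _ hm (fun h => hne' h.symm) w (by simp) hwe
      have hUV : ∀ w : V, w ∈ s(u, x) → w ∉ s(v, y) := by
        intro w hw hw'
        rcases Sym2.mem_iff.mp hw with rfl | rfl <;>
          rcases Sym2.mem_iff.mp hw' with h | h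
        · exact huv h
        · exact huy h
        · exact hvx h.symm
        · exact hxy h
      rcases h1 with rfl | rfl | ⟨hne1, hm1⟩
      · rcases h2 with rfl | rfl | ⟨hne2, hm2⟩
        · exact hne rfl
        · exact hUV w hw1 hw2
        · exact hUX w hw1 _ hm2 hne2 hw2
      · rcases h2 with rfl | rfl | ⟨hne2, hm2⟩
        · exact hUV w hw2 hw1
        · exact hne rfl
        · exact hVY w hw1 _ hm2 hne2 hw2
      · rcases h2 with rfl | rfl | ⟨hne2, hm2⟩
        · exact hUX w hw2 _ hm1 hne1 hw1
        · exact hVY w hw2 _ hm1 hne1 hw1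
        · exact hdisj _ hm1 _ hm2 hne w hw1 hw2
    exact hkey
  · have h1 : s(v, y) ∉ M.erase s(x, y) := by
      intro h
      exact hv _ (mem_of_mem_erase h) (by simp)
    have h2 : s(u, x) ∉ insert s(v, y) (M.erase s(x, y)) := by
      simp only [mem_insert]
      rintro (h | h)
      · have : u ∈ s(v, y) := h ▸ (by simp : u ∈ s(u, x))
        rcases Sym2.mem_iff.mp this with h' | h'
        · exact huv h'
        · exact huy h'
      · exact hu _ (mem_of_mem_erase h) (by simp)
    rw [card_insert_of_notMem h2, card_insert_of_notMem h1,
      card_erase_of_mem he]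
    have : 1 ≤ M.card := card_pos.mpr ⟨_, he⟩
    omega

/-- The key extension step: a matching smaller than `δ(G)` can be enlarged. -/
private lemma step (G : SimpleGraph V) [DecidableRel G.Adj]
    (hn : 3 * G.minDegree ≤ Fintype.card V) (k : ℕ) (hk : k < G.minDegree)
    (M : Finset (Sym2 V)) (hM : IsMatchingF G M) (hcard : M.card = k) :
    ∃ M' : Finset (Sym2 V), IsMatchingF G M' ∧ M'.card = k + 1 := by
  classical
  set S : Finset V := M.biUnion evs with hS
  have hvS : ∀ w : V, ∀ e ∈ M, w ∈ e → w ∈ S := by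
    intro w e hm hwe
    exact mem_biUnion.mpr ⟨e, hm, mem_evs.mpr hwe⟩
  by_cases hA : ∃ e ∈ G.edgeSet, ∀ w : V, w ∈ e → w ∉ S
  · -- a fresh edge exists: just insert it
    obtain ⟨e, hedge, hfresh⟩ := hA
    obtain ⟨x, y, rfl⟩ : ∃ x y, e = s(x, y) := Sym2.exists.mp ⟨e, rfl⟩
    have hnm : s(x, y) ∉ M := fun h => hfresh x (by simp) (hvS x _ h (by simp))
    refine ⟨insert s(x, y) M, ⟨?_, ?_⟩, ?_⟩
    · intro e' h'
      rcases Finset.mem_insert.mp h' with rfl | h'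
      · exact hedge
      · exact hM.1 _ h'
    · intro e₁ h1 e₂ h2 hne w hw1 hw2
      rcases Finset.mem_insert.mp h1 with rfl | h1 <;>
        rcases Finset.mem_insert.mp h2 with rfl | h2
      · exact hne rfl
      · exact hfresh w hw1 (hvS w _ h2 hw2)
      · exact hfresh w hw2 (hvS w _ h1 hw1)
      · exact hM.2 _ h1 _ h2 hne w hw1 hw2
    · rw [Finset.card_insert_of_notMem hnm, hcard]
  · push_neg at hA
    -- every edge meets S, find augmenting pair
    have hScard : S.card ≤ 2 * k := by
      calc S.card ≤ ∑ e ∈ M, (evs e).card := card_biUnion_le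
        _ ≤ ∑ _e ∈ M, 2 := Finset.sum_le_sum (fun e _ => evs_card_le e)
        _ = 2 * k := by rw [Finset.sum_const, hcard]; ring
    have hUcard : 1 < Sᶜ.card := by
      rw [card_compl]
      omega
    obtain ⟨u, hu, v, hv, huv⟩ := Finset.one_lt_card.mp hUcard
    rw [Finset.mem_compl] at hu hv
    have hu_all : ∀ e ∈ M, u ∉ e := fun e hm hwe => hu (hvS u _ hm hwe)
    have hv_all : ∀ e ∈ M, v ∉ e := fun e hm hwe => hv (hvS v _ hm hwe)
    have hNbr : ∀ w : V, w ∉ S → G.neighborFinset w ⊆ S := by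
      intro w hw z hz
      rw [SimpleGraph.mem_neighborFinset] at hz
      obtain ⟨a, ha, haS⟩ := hA s(w, z) (G.mem_edgeSet.mpr hz)
      rcases Sym2.mem_iff.mp ha with rfl | rfl
      · exact absurd haS hw
      · exact haS
    have hsum : ∀ w : V, w ∉ S →
        (G.neighborFinset w).card = ∑ e ∈ M, (G.neighborFinset w ∩ evs e).card := by
      intro w hw
      have h1 : G.neighborFinset w ∩ S = G.neighborFinset w :=
        Finset.inter_eq_left.mpr (hNbr w hw)
      have h2 : G.neighborFinset w ∩ S = M.biUnion (fun e => G.neighborFinset w ∩ evs e) := by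
        rw [hS, Finset.inter_biUnion]
      conv_lhs => rw [← h1, h2]
      apply card_biUnion
      intro e₁ h1' e₂ h2' hne
      rw [Function.onFun, Finset.disjoint_left]
      intro a ha1 ha2
      exact hM.2 _ h1' _ h2' hne a (mem_evs.mp (Finset.mem_inter.mp ha1).2)
        (mem_evs.mp (Finset.mem_inter.mp ha2).2)
    have hdegu : k + 1 ≤ (G.neighborFinset u).card :=
      le_trans hk (G.minDegree_le_degree u)
    have hdegv : k + 1 ≤ (G.neighborFinset v).card :=
      le_trans hk (G.minDegree_le_degree v)
    have hbig : ∃ e ∈ M,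
        3 ≤ (G.neighborFinset u ∩ evs e).card + (G.neighborFinset v ∩ evs e).card := by
      by_contra hcon
      push_neg at hcon
      have : ∑ e ∈ M, ((G.neighborFinset u ∩ evs e).card + (G.neighborFinset v ∩ evs e).card)
          ≤ 2 * k := by
        calc _ ≤ ∑ _e ∈ M, 2 := Finset.sum_le_sum (fun e he => by have := hcon e he; omega)
          _ = 2 * k := by rw [Finset.sum_const, hcard]; ring
      rw [Finset.sum_add_distrib, ← hsum u hu, ← hsum v hv] at this
      omega
    obtain ⟨e, hem, h3⟩ := hbig
    obtain ⟨x, y, rfl⟩ : ∃ x y, e = s(x, y) := Sym2.exists.mp ⟨e, rfl⟩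
    rw [evs_pair] at h3
    have hbound : ∀ w z₁ z₂ : V, (G.neighborFinset w ∩ ({z₁, z₂} : Finset V)).card ≤
        (if G.Adj w z₁ then 1 else 0) + (if G.Adj w z₂ then 1 else 0) := by
      intro w z₁ z₂
      have hsub : G.neighborFinset w ∩ ({z₁, z₂} : Finset V) ⊆
          (if G.Adj w z₁ then ({z₁} : Finset V) else ∅) ∪
          (if G.Adj w z₂ then ({z₂} : Finset V) else ∅) := by
        intro a ha
        obtain ⟨ha1, ha2⟩ := Finset.mem_inter.mp ha
        rw [SimpleGraph.mem_neighborFinset] at ha1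
        rcases Finset.mem_insert.mp ha2 with rfl | h
        · rw [if_pos ha1]; exact Finset.mem_union_left _ (by simp)
        · rw [Finset.mem_singleton] at h; subst h
          rw [if_pos ha1]; exact Finset.mem_union_right _ (by simp)
      calc _ ≤ ((if G.Adj w z₁ then ({z₁} : Finset V) else ∅) ∪
            (if G.Adj w z₂ then ({z₂} : Finset V) else ∅)).card := Finset.card_le_card hsub
        _ ≤ (if G.Adj w z₁ then ({z₁} : Finset V) else ∅).card +
            (if G.Adj w z₂ then ({z₂} : Finset V) else ∅).card := Finset.card_union_le _ _
        _ ≤ _ := by split_ifs <;> simp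
    have hind : 3 ≤ (if G.Adj u x then 1 else 0) + (if G.Adj u y then 1 else 0) +
        ((if G.Adj v x then 1 else 0) + (if G.Adj v y then 1 else 0)) :=
      le_trans h3 (Nat.add_le_add (hbound u x y) (hbound v x y))
    have hcross : (G.Adj u x ∧ G.Adj v y) ∨ (G.Adj u y ∧ G.Adj v x) := by
      by_cases h1 : G.Adj u x <;> by_cases h2 : G.Adj u y <;>
        by_cases h3' : G.Adj v x <;> by_cases h4 : G.Adj v y <;>
        simp [h1, h2, h3', h4] at hind ⊢ <;> tauto
    rcases hcross with ⟨h1, h2⟩ | ⟨h1, h2⟩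
    · obtain ⟨M', hM', hc'⟩ := aug G M hM x y u v hem huv hu_all hv_all h1 h2
      exact ⟨M', hM', by rw [hc', hcard]⟩
    · have hem' : s(y, x) ∈ M := Sym2.eq_swap ▸ hem
      obtain ⟨M', hM', hc'⟩ := aug G M hM y x u v hem' huv hu_all hv_all h1 h2
      exact ⟨M', hM', by rw [hc', hcard]⟩

end Aux

/-- If the largest monochromatic matching of a properly edge-coloured graph `G` has
size `1`, then `G` has a rainbow matching of size `δ(G)` whenever `|G| ≥ 3δ(G)`. -/
theorem stmt_9 {V : Type*} [Fintype V] [DecidableEq V]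
    (G : SimpleGraph V) [DecidableRel G.Adj] (c : Sym2 V → ℕ)
    (hc : IsProperColoring G c)
    (hmono : ∀ N : Finset (Sym2 V), IsMatchingF G N →
      (∃ k : ℕ, ∀ e ∈ N, c e = k) → N.card ≤ 1)
    (hn : 3 * G.minDegree ≤ Fintype.card V) :
    ∃ M : Finset (Sym2 V), IsRainbowMatching G c M ∧ M.card = G.minDegree := by
  classical
  -- every matching is rainbow
  have hrb : ∀ M : Finset (Sym2 V), IsMatchingF G M → Set.InjOn c ↑M := by
    intro M hM e₁ h1 e₂ h2 hce
    by_contra hne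
    rw [Finset.mem_coe] at h1 h2
    by_cases hshare : ∃ w, w ∈ e₁ ∧ w ∈ e₂
    · exact hc e₁ (hM.1 _ h1) e₂ (hM.1 _ h2) hne hshare hce
    · push_neg at hshare
      have hN : IsMatchingF G ({e₁, e₂} : Finset (Sym2 V)) := by
        constructor
        · intro e he
          rcases Finset.mem_insert.mp he with rfl | he
          · exact hM.1 _ h1
          · rw [Finset.mem_singleton] at he; subst he; exact hM.1 _ h2
        · intro f₁ hf1 f₂ hf2 hfne w hw1 hw2
          simp only [Finset.mem_insert, Finset.mem_singleton] at hf1 hf2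
          rcases hf1 with rfl | rfl <;> rcases hf2 with rfl | rfl
          · exact hfne rfl
          · exact hshare w hw1 hw2
          · exact hshare w hw2 hw1
          · exact hfne rfl
      have := hmono {e₁, e₂} hN ⟨c e₁, by
        intro e he
        rcases Finset.mem_insert.mp he with rfl | he
        · rfl
        · rw [Finset.mem_singleton] at he; subst he; exact hce.symm⟩
      rw [Finset.card_insert_of_notMem (by simpa using hne), Finset.card_singleton] at this
      omega
  -- build a matching of each size up to δ
  have hbuild : ∀ k : ℕ, k ≤ G.minDegree →
      ∃ M : Finset (Sym2 V), IsMatchingF G M ∧ M.card = k := by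
    intro k
    induction k with
    | zero => exact fun _ => ⟨∅, ⟨by simp, by simp⟩, by simp⟩
    | succ m ih =>
      intro hm
      obtain ⟨M, hM, hMc⟩ := ih (Nat.le_of_succ_le hm)
      exact step G hn m hm M hM hMc
  obtain ⟨M, hM, hMc⟩ := hbuild G.minDegree le_rfl
  exact ⟨M, ⟨hM, hrb M hM⟩, hMc⟩
end
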